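/- Let 𝒢 > 0, σ̄ > 0, γ := σ̄/(2π𝒢(1 + 6σ̄ + σ̄²)), A := 1 − 8π𝒢γ, and let ρ̄ > 0, ρ := 3ρ̄, p̄ := σ̄ρ̄, and p := σρ for a real number σ. Then the k = 0 conservation (jump) condition (p + ρ̄) − (p̄ + ρ̄)/A = 0 holds if and only if σ = σ̄(σ̄ + 5)/(3(σ̄ + 1)). -/
import Mathlib


open Real

/-- with `γ = σ̄/(2π𝒢(1+6σ̄+σ̄²))`, `A = 1 − 8π𝒢γ`, `ρ = 3ρ̄`, `p̄ = σ̄ρ̄`,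
`p = σρ`, the `k = 0` conservation condition `(p + ρ̄) − (p̄ + ρ̄)/A = 0` holds
if and only if `σ = σ̄(σ̄+5)/(3(σ̄+1))`. -/
theorem stmt_7 (𝒢 σb σ ρb : ℝ) (h𝒢 : 0 < 𝒢) (hσb : 0 < σb) (hρb : 0 < ρb)
    (γ : ℝ) (hγ : γ = σb / (2 * π * 𝒢 * (1 + 6 * σb + σb ^ 2)))
    (A : ℝ) (hA : A = 1 - 8 * π * 𝒢 * γ) :
    (σ * (3 * ρb) + ρb) - (σb * ρb + ρb) / A = 0 ↔
      σ = σb * (σb + 5) / (3 * (σb + 1)) := by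
  have hπ : (0:ℝ) < π := Real.pi_pos
  have hq : (0:ℝ) < 1 + 6 * σb + σb ^ 2 := by positivity
  have hA' : A = (1 + σb) ^ 2 / (1 + 6 * σb + σb ^ 2) := by
    rw [hA, hγ]
    field_simp
    ring
  have hAne : A ≠ 0 := by
    rw [hA']
    positivity
  rw [hA']
  have h1 : (1:ℝ) + σb ≠ 0 := by positivity
  constructor <;> intro h <;> field_simp at h ⊢ <;> nlinarith [sq_nonneg (1+σb), mul_pos hρb hσb, sq_nonneg σb]
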